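/- arXiv:1111.1546 — 4 statements merged into one kernel-verified Lean document; each statement's English description precedes it below -/
import Mathlib

section
/- Let f_i : ℝ → ℝ be the indicator-type function taking the constant value φ_i ≥ 0 on an interval I_i of length ℓ_i and 0 elsewhere (i = 1,...,n), let f(x_1,...,x_n) = ∏_{i=1}^n f_i(x_i), and let A ∈ {-1,0,1}^{n×n} be invertible. Then for any k ∈ {1,...,n-1}, ∫_{y∈ℝ^{n-k}} max_{z∈ℝ^k} f(A⁻¹·(y,z)) dy ≤ 2^k · (n-k)! · (∏_{i=1}^n φ_i) · Σ_I ∏_{i∉I} ℓ_i, where the sum runs over all k-element subsets I ⊆ {1,...,n}. -/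
/-!
Let `M` be the first `n - k` rows of `A` and `B = ∏ [aᵢ, aᵢ + ℓᵢ]`. If `A⁻¹ (y, z) ∈ B` then
`y ∈ M B`, so the supremum over `z` is at most `(∏ φᵢ) · 1_{M B}(y)` and it suffices to bound the
volume of the zonotope `M B`. An extreme point of the fiber `B ∩ M⁻¹{y}` has at most `n - k`
coordinates strictly inside their intervals, since otherwise a kernel vector of `M` supported on
those coordinates moves it both ways inside the fiber. Hence `M B` is covered by the images of the
`(n - k)`-faces of `B`: `2ᵏ` faces for each set `S` of `n - k` free coordinates, each mapped onto
a parallelotope of volume `|det M_S| ∏_{i ∈ S} ℓᵢ ≤ (n - k)! ∏_{i ∈ S} ℓᵢ`, as the entries of `M`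
lie in `[-1, 1]`.
-/

open MeasureTheory Finset Filter Topology
open scoped Matrix Pointwise

section Zonotope

variable {ι κ E : Type*} [Fintype ι]

noncomputable def interiorCoords (lo hi x : ι → ℝ) : Finset ι := {i | x i ∈ Set.Ioo (lo i) (hi i)}

section ExtremePoint

variable [AddCommGroup E] [Module ℝ E] (L : (ι → ℝ) →ₗ[ℝ] E) {lo hi x : ι → ℝ} {y : E}

lemma eventually_add_smul_mem_Icc {w : ι → ℝ} (hx : x ∈ Set.Icc lo hi)
    (hw : ∀ i, w i ≠ 0 → x i ∈ Set.Ioo (lo i) (hi i)) :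
    ∀ᶠ t in 𝓝 (0 : ℝ), x + t • w ∈ Set.Icc lo hi := by
  have hcoord : ∀ i, ∀ᶠ t in 𝓝 (0 : ℝ), x i + t * w i ∈ Set.Icc (lo i) (hi i) := by
    intro i
    by_cases hwi : w i = 0
    · simpa [hwi] using ⟨hx.1 i, hx.2 i⟩
    · have hcont : Tendsto (fun t : ℝ => x i + t * w i) (𝓝 0) (𝓝 (x i)) := by
        simpa using ((continuous_mul_const (w i)).const_add (x i)).tendsto 0
      exact (hcont.eventually (Ioo_mem_nhds (hw i hwi).1 (hw i hwi).2)).mono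
        fun _ ht => Set.Ioo_subset_Icc_self ht
  filter_upwards [eventually_all.2 hcoord] with t ht
  exact ⟨fun i => (ht i).1, fun i => (ht i).2⟩

lemma eq_zero_of_mem_extremePoints_Icc_inter_fiber
    (hx : x ∈ (Set.Icc lo hi ∩ L ⁻¹' {y}).extremePoints ℝ) {w : ι → ℝ} (hLw : L w = 0)
    (hw : ∀ i, w i ≠ 0 → x i ∈ Set.Ioo (lo i) (hi i)) : w = 0 := by
  obtain ⟨⟨hxIcc, hLx⟩, hext⟩ := mem_extremePoints.1 hx
  have hnear := eventually_add_smul_mem_Icc hxIcc hw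
  have hnear' : ∀ᶠ t in 𝓝 (0 : ℝ), x + (-t) • w ∈ Set.Icc lo hi :=
    (continuous_neg.tendsto' (0 : ℝ) 0 neg_zero).eventually hnear
  obtain ⟨t, ⟨hplus, hminus⟩, ht⟩ :=
    (((hnear.and hnear').filter_mono nhdsWithin_le_nhds).and
      (eventually_mem_nhdsWithin (a := (0 : ℝ)) (s := {0}ᶜ))).exists
  have hfiber : ∀ s : ℝ, L (x + s • w) = y := fun s => by simpa [hLw] using hLx
  have hmid : x ∈ openSegment ℝ (x + t • w) (x + (-t) • w) :=
    ⟨1 / 2, 1 / 2, by norm_num, by norm_num, by norm_num, by module⟩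
  have hcollapse := (hext _ ⟨hplus, hfiber t⟩ _ ⟨hminus, hfiber (-t)⟩ hmid).1
  simpa [show t ≠ 0 from ht] using hcollapse

lemma card_interiorCoords_le_finrank [FiniteDimensional ℝ E]
    (hx : x ∈ (Set.Icc lo hi ∩ L ⁻¹' {y}).extremePoints ℝ) :
    #(interiorCoords lo hi x) ≤ Module.finrank ℝ E := by
  set F := interiorCoords lo hi x
  by_contra! hlt
  -- a nonzero kernel vector of `L` supported on `F` contradicts extremality
  let extend := Function.ExtendByZero.linearMap ℝ (Subtype.val : F → ι)
  have hker : LinearMap.ker (L ∘ₗ extend) ≠ ⊥ :=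
    LinearMap.ker_ne_bot_of_finrank_lt (by simpa using hlt)
  obtain ⟨v, hv, hv0⟩ := Submodule.exists_mem_ne_zero_of_ne_bot hker
  have hsupp : ∀ i, extend v i ≠ 0 → x i ∈ Set.Ioo (lo i) (hi i) := by
    intro i hvi
    by_contra h
    refine hvi (Function.extend_apply' _ _ _ ?_)
    rintro ⟨j, rfl⟩
    exact h (mem_filter.1 j.2).2
  have hzero := eq_zero_of_mem_extremePoints_Icc_inter_fiber L hx hv hsupp
  exact hv0 (funext fun j => by
    simpa [extend, Subtype.val_injective.extend_apply] using congrFun hzero j)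

end ExtremePoint

lemma exists_mem_Icc_map_eq_card_interiorCoords_le [NormedAddCommGroup E] [NormedSpace ℝ E]
    [FiniteDimensional ℝ E] (L : (ι → ℝ) →ₗ[ℝ] E) {lo hi x : ι → ℝ} (hx : x ∈ Set.Icc lo hi) :
    ∃ x' ∈ Set.Icc lo hi, L x' = L x ∧ #(interiorCoords lo hi x') ≤ Module.finrank ℝ E := by
  have hcompact : IsCompact (Set.Icc lo hi ∩ L ⁻¹' {L x}) :=
    isCompact_Icc.inter_right (isClosed_singleton.preimage L.continuous_of_finiteDimensional)
  obtain ⟨x', hx'⟩ := hcompact.extremePoints_nonempty ⟨x, hx, rfl⟩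
  exact ⟨x', hx'.1.1, hx'.1.2, card_interiorCoords_le_finrank L hx'⟩

section BoxFaces

open scoped Nat

variable [Fintype κ] [DecidableEq ι]

def boxFace (lo hi : ι → ℝ) (S : Finset ι) (u : ι → ℝ) : Set (ι → ℝ) :=
  {x ∈ Set.Icc lo hi | ∀ i ∉ S, x i = u i}

lemma volume_mulVec_image_boxFace_le [DecidableEq κ] (M : Matrix κ ι ℝ) (hM : ∀ j i, |M j i| ≤ 1)
    {lo hi : ι → ℝ} (hlohi : lo ≤ hi) {S : Finset ι} (hS : #S = Fintype.card κ) (u : ι → ℝ) :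
    volume ((M *ᵥ ·) '' boxFace lo hi S u)
      ≤ ENNReal.ofReal ((Fintype.card κ)! * ∏ i ∈ S, (hi i - lo i)) := by
  obtain e : κ ≃ S := Fintype.equivOfCardEq (by simp [hS])
  set σ : κ → ι := fun q => (e q : ι)
  have hσ : Function.Injective σ := Subtype.val_injective.comp e.injective
  set N : Matrix κ κ ℝ := M.submatrix id σ
  set u' : ι → ℝ := fun i => if i ∈ S then 0 else u i
  have himage : (M *ᵥ ·) '' boxFace lo hi S u
      ⊆ (M *ᵥ u') +ᵥ (Matrix.toLin' N '' Set.Icc (lo ∘ σ) (hi ∘ σ)) := by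
    rintro _ ⟨x, ⟨hx, hxu⟩, rfl⟩
    refine ⟨N *ᵥ (x ∘ σ), ⟨x ∘ σ, ⟨fun q => hx.1 _, fun q => hx.2 _⟩, rfl⟩, ?_⟩
    have hsum : N *ᵥ (x ∘ σ) = M *ᵥ (x - u') := by
      funext j
      refine Fintype.sum_of_injective σ hσ _ _ (fun i hi => ?_) (fun q => ?_)
      · have hiS : i ∉ S := fun hiS => hi ⟨e.symm ⟨i, hiS⟩, by simp [σ]⟩
        simp [u', hiS, hxu i hiS]
      · simp [N, u', σ]
    change M *ᵥ u' + N *ᵥ (x ∘ σ) = M *ᵥ x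
    rw [hsum, ← Matrix.mulVec_add, add_sub_cancel]
  have hdet : |N.det| ≤ (Fintype.card κ)! := by
    simpa using Matrix.det_le (A := N) (abv := AbsoluteValue.abs) fun j q => hM j (σ q)
  have hprod : ∏ q, (hi (σ q) - lo (σ q)) = ∏ i ∈ S, (hi i - lo i) :=
    (e.prod_comp fun i : S => hi i - lo i).trans (prod_coe_sort S fun i => hi i - lo i)
  calc volume ((M *ᵥ ·) '' boxFace lo hi S u)
      ≤ volume ((M *ᵥ u') +ᵥ (Matrix.toLin' N '' Set.Icc (lo ∘ σ) (hi ∘ σ))) :=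
        measure_mono himage
    _ = ENNReal.ofReal (|N.det| * ∏ i ∈ S, (hi i - lo i)) := by
        rw [measure_vadd, Measure.addHaar_image_linearMap, LinearMap.det_toLin',
          Real.volume_Icc_pi]
        simp only [Function.comp_apply]
        rw [← ENNReal.ofReal_prod_of_nonneg fun q _ => sub_nonneg.2 (hlohi _), hprod,
          ← ENNReal.ofReal_mul (abs_nonneg _)]
    _ ≤ ENNReal.ofReal ((Fintype.card κ)! * ∏ i ∈ S, (hi i - lo i)) := by
        gcongr
        exact prod_nonneg fun i _ => sub_nonneg.2 (hlohi i)

lemma mulVec_image_Icc_subset_iUnion_boxFace (M : Matrix κ ι ℝ) {lo hi : ι → ℝ}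
    (hcard : Fintype.card κ ≤ Fintype.card ι) :
    (M *ᵥ ·) '' Set.Icc lo hi ⊆ ⋃ S ∈ powersetCard (Fintype.card κ) univ,
      ⋃ T ∈ (univ \ S).powerset, (M *ᵥ ·) '' boxFace lo hi S (T.piecewise hi lo) := by
  rintro _ ⟨x, hx, rfl⟩
  obtain ⟨x', hx', hMx', hfree⟩ := exists_mem_Icc_map_eq_card_interiorCoords_le M.mulVecLin hx
  rw [Module.finrank_fintype_fun_eq_card] at hfree
  obtain ⟨S, hFS, -, hS⟩ := exists_subsuperset_card_eq (subset_univ _) hfree (by simpa using hcard)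
  simp only [Set.mem_iUnion, exists_prop, mem_powersetCard_univ, mem_powerset]
  refine ⟨S, hS, {i ∈ univ \ S | x' i = hi i}, filter_subset _ _, x', ⟨hx', fun i hiS => ?_⟩, hMx'⟩
  have hbdry : x' i ∉ Set.Ioo (lo i) (hi i) := fun h => hiS (hFS (mem_filter.2 ⟨mem_univ _, h⟩))
  by_cases h : x' i = hi i
  · simp [Finset.piecewise, hiS, h]
  · simp only [Finset.piecewise, mem_filter, h, and_false, if_false]
    exact ((hx'.1 i).eq_or_lt.resolve_right fun hlt => hbdry ⟨hlt, (hx'.2 i).lt_of_ne h⟩).symm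

lemma volume_mulVec_image_Icc_le (M : Matrix κ ι ℝ) (hM : ∀ j i, |M j i| ≤ 1)
    {lo hi : ι → ℝ} (hlohi : lo ≤ hi) (hcard : Fintype.card κ ≤ Fintype.card ι) :
    volume ((M *ᵥ ·) '' Set.Icc lo hi) ≤ ENNReal.ofReal (2 ^ (Fintype.card ι - Fintype.card κ) *
      (Fintype.card κ)! * ∑ S ∈ powersetCard (Fintype.card κ) univ, ∏ i ∈ S, (hi i - lo i)) := by
  classical
  set m := Fintype.card κ
  have hnonneg : ∀ S : Finset ι, 0 ≤ (m ! : ℝ) * ∏ i ∈ S, (hi i - lo i) := fun S =>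
    mul_nonneg (Nat.cast_nonneg _) (prod_nonneg fun i _ => sub_nonneg.2 (hlohi i))
  calc volume ((M *ᵥ ·) '' Set.Icc lo hi)
      ≤ ∑ S ∈ powersetCard m univ, ∑ T ∈ (univ \ S).powerset,
          volume ((M *ᵥ ·) '' boxFace lo hi S (T.piecewise hi lo)) :=
        (measure_mono (mulVec_image_Icc_subset_iUnion_boxFace M hcard)).trans <|
          (measure_biUnion_finset_le _ _).trans <|
            sum_le_sum fun S _ => measure_biUnion_finset_le _ _
    _ ≤ ∑ S ∈ powersetCard m univ, ∑ T ∈ (univ \ S).powerset,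
          ENNReal.ofReal (m ! * ∏ i ∈ S, (hi i - lo i)) := by
        gcongr with S hS
        exact volume_mulVec_image_boxFace_le M hM hlohi (mem_powersetCard_univ.1 hS) _
    _ = ∑ S ∈ powersetCard m univ,
          ENNReal.ofReal (2 ^ (Fintype.card ι - m) * (m ! * ∏ i ∈ S, (hi i - lo i))) :=
        sum_congr rfl fun S hS => by
          rw [sum_const, card_powerset, card_univ_sdiff, mem_powersetCard_univ.1 hS, nsmul_eq_mul,
            ENNReal.ofReal_mul (by positivity)]
          simp
    _ = _ := by
        rw [← ENNReal.ofReal_sum_of_nonneg fun S _ => mul_nonneg (by positivity) (hnonneg S),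
          ← mul_sum, ← mul_sum, mul_assoc]

end BoxFaces

end Zonotope

lemma sum_powersetCard_univ_sdiff {α M : Type*} [Fintype α] [DecidableEq α] [AddCommMonoid M]
    {k : ℕ} (hk : k ≤ Fintype.card α) (g : Finset α → M) :
    ∑ I ∈ powersetCard k univ, g (univ \ I) = ∑ S ∈ powersetCard (Fintype.card α - k) univ, g S := by
  refine sum_nbij' (univ \ ·) (univ \ ·) (fun I hI => ?_) (fun S hS => ?_) (fun I _ => ?_)
    (fun S _ => ?_) (fun _ _ => rfl)
  · rw [mem_powersetCard_univ] at hI ⊢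
    rw [card_univ_sdiff, hI]
  · rw [mem_powersetCard_univ] at hS ⊢
    rw [card_univ_sdiff, hS]
    omega
  all_goals simp

lemma prod_eq_indicator_Icc {ι : Type*} [Fintype ι] {f : ι → ℝ → ℝ} {φ lo hi : ι → ℝ}
    (hf : ∀ i t, f i t = if t ∈ Set.Icc (lo i) (hi i) then φ i else 0) (x : ι → ℝ) :
    ∏ i, f i (x i) = (Set.Icc lo hi).indicator (fun _ => ∏ i, φ i) x := by
  by_cases hx : x ∈ Set.Icc lo hi
  · rw [Set.indicator_of_mem hx]
    exact prod_congr rfl fun i _ => by rw [hf, if_pos ⟨hx.1 i, hx.2 i⟩]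
  · obtain ⟨i, hi⟩ : ∃ i, x i ∉ Set.Icc (lo i) (hi i) := by
      by_contra! h
      exact hx ⟨fun i => (h i).1, fun i => (h i).2⟩
    rw [Set.indicator_of_notMem hx, prod_eq_zero (mem_univ i) (by rw [hf, if_neg hi])]

lemma ciSup_indicator_le_indicator_image {X Y Z : Type*} [Nonempty Z] {B : Set X} {L : X → Y}
    {P : Z → X} {y : Y} {c : ℝ} (hc : 0 ≤ c) (hP : ∀ z, L (P z) = y) :
    ⨆ z, B.indicator (fun _ => c) (P z) ≤ (L '' B).indicator (fun _ => c) y := by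
  refine ciSup_le fun z => ?_
  by_cases hz : P z ∈ B
  · rw [Set.indicator_of_mem hz, Set.indicator_of_mem (show y ∈ L '' B from ⟨P z, hz, hP z⟩)]
  · rw [Set.indicator_of_notMem hz]
    exact Set.indicator_nonneg (fun _ _ => hc) y

lemma integral_le_of_le_indicator_const {α : Type*} [MeasurableSpace α] {μ : Measure α}
    {g : α → ℝ} {s : Set α} {c r : ℝ} (hs : MeasurableSet s) (hμs : μ s ≤ ENNReal.ofReal r)
    (hr : 0 ≤ r) (hc : 0 ≤ c) (hg_nonneg : 0 ≤ g) (hg : ∀ x, g x ≤ s.indicator (fun _ => c) x) :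
    ∫ x, g x ∂μ ≤ r * c := by
  have hμs_fin : μ s ≠ ⊤ := (hμs.trans_lt ENNReal.ofReal_lt_top).ne
  calc ∫ x, g x ∂μ ≤ ∫ x, s.indicator (fun _ => c) x ∂μ :=
        integral_mono_of_nonneg (ae_of_all _ hg_nonneg)
          ((integrable_indicator_iff hs).2 (integrableOn_const hμs_fin)) (ae_of_all _ hg)
    _ = μ.real s * c := integral_indicator_const _ hs
    _ ≤ r * c := by gcongr; exact ENNReal.toReal_le_of_le_ofReal hr hμs

theorem rectangular_functions_integral_bound_general
    (n k : ℕ) (hkn : k < n)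
    (φ ℓ a : Fin n → ℝ) (hφ : ∀ i, 0 ≤ φ i) (hℓ : ∀ i, 0 ≤ ℓ i)
    (f : Fin n → ℝ → ℝ)
    (hf : ∀ i x, f i x = if x ∈ Set.Icc (a i) (a i + ℓ i) then φ i else 0)
    (A : Matrix (Fin n) (Fin n) ℝ)
    (hA : ∀ i j, A i j = -1 ∨ A i j = 0 ∨ A i j = 1)
    (hinv : IsUnit A.det) :
    (∫ y : Fin (n - k) → ℝ,
        ⨆ z : Fin k → ℝ, ∏ i, f i (A⁻¹.mulVec
          (fun i' => Fin.append y z (Fin.cast (Nat.sub_add_cancel hkn.le).symm i')) i))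
      ≤ 2 ^ k * (Nat.factorial (n - k)) * (∏ i, φ i) *
        ∑ I ∈ Finset.powersetCard k (Finset.univ : Finset (Fin n)),
          ∏ i ∈ Finset.univ \ I, ℓ i := by
  have hmk : n - k + k = n := Nat.sub_add_cancel hkn.le
  set M : Matrix (Fin (n - k)) (Fin n) ℝ := A.submatrix (fun j => Fin.cast hmk (Fin.castAdd k j)) id
  have hM : ∀ j i, |M j i| ≤ 1 := fun j i => by
    rcases hA (Fin.cast hmk (Fin.castAdd k j)) i with h | h | h <;> simp [M, h]
  have hproj : ∀ y z, M *ᵥ (A⁻¹ *ᵥ fun i' => Fin.append y z (Fin.cast hmk.symm i')) = y :=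
    fun y z => funext fun j => by
      change (A *ᵥ (A⁻¹ *ᵥ _)) _ = y j
      rw [Matrix.mulVec_mulVec, Matrix.mul_nonsing_inv A hinv, Matrix.one_mulVec]
      simp
  have hV : IsCompact ((M *ᵥ ·) '' Set.Icc a (a + ℓ)) :=
    isCompact_Icc.image M.mulVecLin.continuous_of_finiteDimensional
  have hvol := volume_mulVec_image_Icc_le M hM (le_add_of_nonneg_right (a := a) hℓ) (by simp)
  simp only [Fintype.card_fin, Nat.sub_sub_self hkn.le, Pi.add_apply, add_sub_cancel_left] at hvol
  simp_rw [prod_eq_indicator_Icc (lo := a) (hi := a + ℓ) hf]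
  calc _ ≤ (2 ^ k * (n - k).factorial * ∑ S ∈ powersetCard (n - k) univ, ∏ i ∈ S, ℓ i) * ∏ i, φ i :=
        integral_le_of_le_indicator_const hV.measurableSet hvol
          (mul_nonneg (by positivity) (sum_nonneg fun S _ => prod_nonneg fun i _ => hℓ i))
          (prod_nonneg fun i _ => hφ i)
          (fun y => Real.iSup_nonneg fun z =>
            Set.indicator_nonneg (fun _ _ => prod_nonneg fun i _ => hφ i) _)
          (fun y => ciSup_indicator_le_indicator_image (prod_nonneg fun i _ => hφ i) (hproj y))
    _ = _ := by
        rw [sum_powersetCard_univ_sdiff (by simpa using hkn.le) fun S => ∏ i ∈ S, ℓ i,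
          Fintype.card_fin]
        ring

/-- For products of rectangular (indicator-type) functions and an invertible
{-1,0,1} matrix `A`, the integral over `y` of the supremum over `z` of `f (A⁻¹ (y,z))`
is at most `2^k · (n-k)! · ∏ φᵢ · Σ_I ∏_{i∉I} ℓᵢ`. -/
theorem rectangular_functions_integral_bound
    (n k : ℕ) (hk1 : 1 ≤ k) (hkn : k < n)
    (φ ℓ a : Fin n → ℝ) (hφ : ∀ i, 0 ≤ φ i) (hℓ : ∀ i, 0 ≤ ℓ i)
    (f : Fin n → ℝ → ℝ)
    (hf : ∀ i x, f i x = if x ∈ Set.Icc (a i) (a i + ℓ i) then φ i else 0)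
    (A : Matrix (Fin n) (Fin n) ℝ)
    (hA : ∀ i j, A i j = -1 ∨ A i j = 0 ∨ A i j = 1)
    (hinv : IsUnit A.det) :
    (∫ y : Fin (n - k) → ℝ,
        ⨆ z : Fin k → ℝ, ∏ i, f i (A⁻¹.mulVec
          (fun i' => Fin.append y z (Fin.cast (Nat.sub_add_cancel hkn.le).symm i')) i))
      ≤ 2 ^ k * (Nat.factorial (n - k)) * (∏ i, φ i) *
        ∑ I ∈ Finset.powersetCard k (Finset.univ : Finset (Fin n)),
          ∏ i ∈ Finset.univ \ I, ℓ i :=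
  rectangular_functions_integral_bound_general n k hkn φ ℓ a hφ hℓ f hf A hA hinv
end

section
/- Let f : [-1,1] → [0,φ] be quasiconcave and let δ > 0. Then the function g = ⌈f/δ⌉·δ can be written as a finite sum g = Σ_{k=1}^N f_k of functions f_k, where each f_k takes a constant positive value φ_k on an interval I_k and 0 elsewhere, and Σ_{k=1}^N φ_k = max_{x∈[-1,1]} g(x). -/
lemma sum_ind_lt (N m : ℕ) (hm : m ≤ N) (δ : ℝ) :
    (∑ j : Fin N, if (j : ℕ) < m then δ else 0) = m * δ := by
  classical
  rw [Fin.sum_univ_eq_sum_range (fun j => if j < m then δ else 0) N,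
    Finset.sum_ite, Finset.sum_const, Finset.sum_const_zero, add_zero, nsmul_eq_mul]
  have : (Finset.range N).filter (· < m) = Finset.range m := by
    ext j; simp only [Finset.mem_filter, Finset.mem_range]; omega
  rw [this, Finset.card_range]

open Classical in

/-- The δ-rounding `g = ⌈f/δ⌉·δ` of a quasiconcave density `f : [-1,1] → [0,φ]`
decomposes as a finite sum of positive constant functions on intervals, whose constant
values sum to the maximum of `g` on `[-1,1]`. -/
theorem quasiconcave_staircase_decomposition
    (φ δ : ℝ) (hδ : 0 < δ)
    (f : ℝ → ℝ) (hf0 : ∀ x, 0 ≤ f x) (hfφ : ∀ x, f x ≤ φ)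
    (x₀ : ℝ) (hx₀ : x₀ ∈ Set.Icc (-1 : ℝ) 1)
    (hmono : MonotoneOn f (Set.Icc (-1) x₀)) (hanti : AntitoneOn f (Set.Icc x₀ 1))
    (g : ℝ → ℝ) (hg : ∀ x, g x = (⌈f x / δ⌉ : ℝ) * δ) :
    ∃ (N : ℕ) (φk : Fin N → ℝ) (I : Fin N → Set ℝ),
      (∀ j, 0 < φk j) ∧ (∀ j, (I j).OrdConnected) ∧
      (∀ x ∈ Set.Icc (-1 : ℝ) 1, g x = ∑ j, if x ∈ I j then φk j else 0) ∧
      ∃ xm ∈ Set.Icc (-1 : ℝ) 1, (∑ j, φk j) = g xm ∧ ∀ x ∈ Set.Icc (-1 : ℝ) 1, g x ≤ g xm := by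
  -- f attains its max on [-1,1] at x₀
  have hmax : ∀ x ∈ Set.Icc (-1 : ℝ) 1, f x ≤ f x₀ := by
    intro x hx
    rcases le_total x x₀ with h | h
    · exact hmono ⟨hx.1, h⟩ ⟨hx₀.1, le_refl _⟩ h
    · exact hanti ⟨le_refl _, hx₀.2⟩ ⟨h, hx.2⟩ h
  have hc0 : (0 : ℤ) ≤ ⌈f x₀ / δ⌉ := Int.ceil_nonneg (div_nonneg (hf0 x₀) hδ.le)
  set N : ℕ := (⌈f x₀ / δ⌉).toNat with hN
  have hNcast : ((N : ℤ)) = ⌈f x₀ / δ⌉ := Int.toNat_of_nonneg hc0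
  refine ⟨N, fun _ => δ, fun j => {x | x ∈ Set.Icc (-1 : ℝ) 1 ∧ ((j : ℕ) : ℝ) * δ < f x},
    fun _ => hδ, ?_, ?_, ?_⟩
  · -- OrdConnected
    intro j
    constructor
    intro x hx y hy z hz
    refine ⟨⟨hx.1.1.trans hz.1, hz.2.trans hy.1.2⟩, ?_⟩
    rcases le_total z x₀ with h | h
    · exact lt_of_lt_of_le hx.2
        (hmono ⟨hx.1.1, hz.1.trans h⟩ ⟨hx.1.1.trans hz.1, h⟩ hz.1)
    · exact lt_of_lt_of_le hy.2
        (hanti ⟨h, hz.2.trans hy.1.2⟩ ⟨h.trans hz.2, hy.1.2⟩ hz.2)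
  · -- sum formula
    intro x hx
    have hcx0 : (0 : ℤ) ≤ ⌈f x / δ⌉ := Int.ceil_nonneg (div_nonneg (hf0 x) hδ.le)
    set m : ℕ := (⌈f x / δ⌉).toNat with hm
    have hmcast : ((m : ℤ)) = ⌈f x / δ⌉ := Int.toNat_of_nonneg hcx0
    have hmN : m ≤ N := by
      have : ⌈f x / δ⌉ ≤ ⌈f x₀ / δ⌉ :=
        Int.ceil_le_ceil (div_le_div_of_nonneg_right (hmax x hx) hδ.le)
      omega
    have hmem : ∀ j : Fin N,
        (x ∈ {x | x ∈ Set.Icc (-1 : ℝ) 1 ∧ ((j : ℕ) : ℝ) * δ < f x}) ↔ (j : ℕ) < m := by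
      intro j
      simp only [Set.mem_setOf_eq]
      constructor
      · intro h
        have : ((j : ℕ) : ℝ) < f x / δ := (lt_div_iff₀ hδ).mpr h.2
        have : ((j : ℕ) : ℤ) < ⌈f x / δ⌉ := by exact_mod_cast Int.lt_ceil.mpr this
        omega
      · intro h
        refine ⟨hx, ?_⟩
        have : ((j : ℕ) : ℤ) < ⌈f x / δ⌉ := by omega
        have := Int.lt_ceil.mp this
        push_cast at this
        exact (lt_div_iff₀ hδ).mp this
    calc g x = (⌈f x / δ⌉ : ℝ) * δ := hg x
      _ = (m : ℝ) * δ := by rw [← hmcast]; push_cast; ring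
      _ = ∑ j : Fin N, if (j : ℕ) < m then δ else 0 := (sum_ind_lt N m hmN δ).symm
      _ = _ := by
          apply Finset.sum_congr rfl
          intro j _
          simp only [hmem j]
  · refine ⟨x₀, hx₀, ?_, ?_⟩
    · rw [hg x₀, Finset.sum_const, Finset.card_univ, Fintype.card_fin, nsmul_eq_mul,
        ← hNcast]
      push_cast; ring
    · intro x hx
      rw [hg x, hg x₀]
      have : ⌈f x / δ⌉ ≤ ⌈f x₀ / δ⌉ :=
        Int.ceil_le_ceil (div_le_div_of_nonneg_right (hmax x hx) hδ.le)
      exact mul_le_mul_of_nonneg_right (by exact_mod_cast this) hδ.le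
end

section
/- Let S ⊆ {0,1}^n and V^1, V^2 : S → ℝ with V^2 injective. Partition S into classes of solutions agreeing in all components except the first, and let S' contain from each class only the solution with the smallest V^2-value. If the coefficient of x_1 in V^1 is zero (i.e., V^1 does not depend on x_1), then the set of Pareto-optimal solutions with respect to (S, V^1, V^2) equals the set of Pareto-optimal solutions with respect to (S', V^1, V^2); in particular their numbers coincide. -/
/-- In the bicriteria case, if `V¹` does not depend on the first binary
variable and `V²` is injective on `S`, then replacing `S` by the set `S'` of solutions that
minimize `V²` within their class (solutions agreeing in all components except the first)
leaves the set of Pareto-optimal solutions unchanged. -/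
theorem bicriteria_zero_coefficient_reduction
    (n : ℕ) (hn : 0 < n) (S : Set (Fin n → Bool))
    (V1 V2 : (Fin n → Bool) → ℝ)
    (hV2 : Set.InjOn V2 S)
    (hV1 : ∀ x b, V1 (Function.update x ⟨0, hn⟩ b) = V1 x)
    (S' : Set (Fin n → Bool))
    (hS' : S' = {x ∈ S | ∀ y ∈ S, (∀ i : Fin n, i ≠ ⟨0, hn⟩ → y i = x i) → V2 x ≤ V2 y}) :
    {x ∈ S | ¬ ∃ y ∈ S, (V1 y ≤ V1 x ∧ V2 y ≤ V2 x) ∧ (V1 y < V1 x ∨ V2 y < V2 x)} =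
    {x ∈ S' | ¬ ∃ y ∈ S', (V1 y ≤ V1 x ∧ V2 y ≤ V2 x) ∧ (V1 y < V1 x ∨ V2 y < V2 x)} := by
  subst hS'
  -- if y agrees with x off coordinate 0, then y is x or the flip of x at 0
  have key : ∀ (x y : Fin n → Bool), (∀ i : Fin n, i ≠ ⟨0, hn⟩ → y i = x i) →
      y = x ∨ y = Function.update x ⟨0, hn⟩ (!(x ⟨0, hn⟩)) := by
    intro x y hy
    by_cases h : y ⟨0, hn⟩ = x ⟨0, hn⟩
    · left; funext i
      by_cases hi : i = ⟨0, hn⟩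
      · subst hi; exact h
      · exact hy i hi
    · right; funext i
      by_cases hi : i = ⟨0, hn⟩
      · subst hi
        rw [Function.update_self]
        cases hxb : x ⟨0, hn⟩ <;> cases hyb : y ⟨0, hn⟩ <;> simp_all
      · rw [Function.update_of_ne hi]; exact hy i hi
  -- every element of S has a class-minimizer in S' with the same V1 and no larger V2
  have minz : ∀ y ∈ S, ∃ z ∈ {x ∈ S | ∀ w ∈ S,
      (∀ i : Fin n, i ≠ ⟨0, hn⟩ → w i = x i) → V2 x ≤ V2 w},
      V1 z = V1 y ∧ V2 z ≤ V2 y := by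
    intro y hy
    set y2 := Function.update y ⟨0, hn⟩ (!(y ⟨0, hn⟩)) with hy2def
    have hflip : Function.update y2 ⟨0, hn⟩ (!(y2 ⟨0, hn⟩)) = y := by
      funext i
      by_cases hi : i = ⟨0, hn⟩
      · subst hi; simp [hy2def]
      · rw [Function.update_of_ne hi, hy2def, Function.update_of_ne hi]
    by_cases hc : y2 ∈ S ∧ V2 y2 < V2 y
    · refine ⟨y2, ⟨hc.1, ?_⟩, hV1 y _, le_of_lt hc.2⟩
      intro w hw hagree
      rcases key y2 w hagree with rfl | h
      · exact le_refl _
      · rw [h, hflip]; exact le_of_lt hc.2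
    · refine ⟨y, ⟨hy, ?_⟩, rfl, le_refl _⟩
      intro w hw hagree
      rcases key y w hagree with rfl | h
      · exact le_refl _
      · rw [h]
        by_contra hlt
        push_neg at hlt
        rw [← hy2def] at h
        exact hc ⟨h ▸ hw, hlt⟩
  ext x
  simp only [Set.mem_setOf_eq]
  constructor
  · rintro ⟨hxS, hP⟩
    have hxmin : ∀ y ∈ S, (∀ i : Fin n, i ≠ ⟨0, hn⟩ → y i = x i) → V2 x ≤ V2 y := by
      intro y hy hagree
      by_contra hlt
      push_neg at hlt
      have hV1eq : V1 y = V1 x := by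
        rcases key x y hagree with rfl | h
        · rfl
        · rw [h]; exact hV1 x _
      exact hP ⟨y, hy, ⟨le_of_eq hV1eq, le_of_lt hlt⟩, Or.inr hlt⟩
    refine ⟨⟨hxS, hxmin⟩, ?_⟩
    rintro ⟨y, ⟨hyS, _⟩, hd⟩
    exact hP ⟨y, hyS, hd⟩
  · rintro ⟨⟨hxS, hxmin⟩, hP'⟩
    refine ⟨hxS, ?_⟩
    rintro ⟨y, hyS, ⟨h1, h2⟩, h3⟩
    obtain ⟨z, hz', hV1z, hV2z⟩ := minz y hyS
    refine hP' ⟨z, hz', ⟨hV1z ▸ h1, le_trans hV2z h2⟩, ?_⟩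
    rcases h3 with h | h
    · exact Or.inl (hV1z ▸ h)
    · exact Or.inr (lt_of_le_of_lt hV2z h)
end

section
/- Let S ⊆ {0,1}^n, let V^{d+1} : S → ℝ, and let I^1_1,...,I^1_m : S → {0,1} be arbitrary functions with weights w_1,...,w_m ∈ ℝ defining V^1(x) = Σ_{j=1}^m w_j I^1_j(x). Define S' = {y ∈ {0,1}^m : ∃x∈S ∀j: I^1_j(x) = y_j}, W^1(y) = Σ_j w_j y_j, and W^2(y) = min{V^{d+1}(x) : x ∈ S, ∀j: I^1_j(x) = y_j}. Then the number of Pareto-optimal solutions of (S, V^1, V^{d+1}) equals the number of Pareto-optimal solutions of (S', W^1, W^2), assuming V^{d+1} is injective on S. -/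
/-- Linearization of a weighted sum of arbitrary binary functions: the number
of Pareto-optimal solutions of `(S, V¹, V^{d+1})` equals that of the linearized problem
`(S', W¹, W²)`. -/
theorem linearization_preserves_pareto_count
    (n m : ℕ) (S : Set (Fin n → Bool))
    (Vd1 : (Fin n → Bool) → ℝ) (hVd1 : Set.InjOn Vd1 S)
    (I : Fin m → (Fin n → Bool) → Bool) (w : Fin m → ℝ)
    (V1 : (Fin n → Bool) → ℝ)
    (hV1 : ∀ x, V1 x = ∑ j, w j * (if I j x then 1 else 0))
    (S' : Set (Fin m → Bool)) (hS' : S' = {y | ∃ x ∈ S, ∀ j, I j x = y j})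
    (W1 : (Fin m → Bool) → ℝ) (hW1 : ∀ y, W1 y = ∑ j, w j * (if y j then 1 else 0))
    (W2 : (Fin m → Bool) → ℝ)
    (hW2 : ∀ y, W2 y = sInf {v | ∃ x ∈ S, (∀ j, I j x = y j) ∧ Vd1 x = v}) :
    {x ∈ S | ¬ ∃ z ∈ S, (V1 z ≤ V1 x ∧ Vd1 z ≤ Vd1 x) ∧
        (V1 z < V1 x ∨ Vd1 z < Vd1 x)}.ncard =
    {y ∈ S' | ¬ ∃ z ∈ S', (W1 z ≤ W1 y ∧ W2 z ≤ W2 y) ∧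
        (W1 z < W1 y ∨ W2 z < W2 y)}.ncard := by
  classical
  set φ : (Fin n → Bool) → (Fin m → Bool) := fun x j => I j x with hφ
  have hV1W1 : ∀ x, V1 x = W1 (φ x) := by
    intro x; rw [hV1, hW1]
  have hφS' : ∀ x ∈ S, φ x ∈ S' := by
    intro x hx; rw [hS']; exact ⟨x, hx, fun j => rfl⟩
  have hfin : ∀ y : Fin m → Bool,
      ({v | ∃ x ∈ S, (∀ j, I j x = y j) ∧ Vd1 x = v} : Set ℝ).Finite := by
    intro y
    apply (Set.finite_univ.image Vd1).subset
    rintro v ⟨x, _, _, rfl⟩; exact ⟨x, trivial, rfl⟩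
  have hbdd : ∀ y : Fin m → Bool,
      BddBelow {v | ∃ x ∈ S, (∀ j, I j x = y j) ∧ Vd1 x = v} :=
    fun y => (hfin y).bddBelow
  have hle : ∀ x ∈ S, W2 (φ x) ≤ Vd1 x := by
    intro x hx
    rw [hW2]
    exact csInf_le (hbdd _) ⟨x, hx, fun j => rfl, rfl⟩
  have hmem : ∀ y ∈ S', ∃ x ∈ S, φ x = y ∧ Vd1 x = W2 y := by
    intro y hy
    rw [hS'] at hy
    obtain ⟨x, hx, hxy⟩ := hy
    have hne : {v | ∃ x ∈ S, (∀ j, I j x = y j) ∧ Vd1 x = v}.Nonempty :=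
      ⟨Vd1 x, x, hx, hxy, rfl⟩
    have h := hne.csInf_mem (hfin y)
    rw [← hW2] at h
    obtain ⟨z, hz, hzy, hzv⟩ := h
    exact ⟨z, hz, funext hzy, hzv⟩
  set A := {x ∈ S | ¬ ∃ z ∈ S, (V1 z ≤ V1 x ∧ Vd1 z ≤ Vd1 x) ∧
      (V1 z < V1 x ∨ Vd1 z < Vd1 x)} with hA
  set B := {y ∈ S' | ¬ ∃ z ∈ S', (W1 z ≤ W1 y ∧ W2 z ≤ W2 y) ∧
      (W1 z < W1 y ∨ W2 z < W2 y)} with hB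
  -- key: for Pareto-optimal x, Vd1 x = W2 (φ x)
  have hkey : ∀ x ∈ A, Vd1 x = W2 (φ x) := by
    rintro x ⟨hxS, hxP⟩
    obtain ⟨z, hzS, hzφ, hzv⟩ := hmem (φ x) (hφS' x hxS)
    have h1 : W2 (φ x) ≤ Vd1 x := hle x hxS
    rcases lt_or_eq_of_le h1 with hlt | heq
    · exfalso
      apply hxP
      refine ⟨z, hzS, ⟨?_, ?_⟩, Or.inr ?_⟩
      · rw [hV1W1 z, hzφ, ← hV1W1 x]
      · rw [hzv]; exact le_of_lt hlt
      · rw [hzv]; exact hlt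
    · exact heq.symm
  have hinj : Set.InjOn φ A := by
    intro x1 h1 x2 h2 he
    exact hVd1 h1.1 h2.1 (by rw [hkey x1 h1, hkey x2 h2, he])
  have himg : φ '' A = B := by
    ext y
    constructor
    · rintro ⟨x, hxA, rfl⟩
      obtain ⟨hxS, hxP⟩ := hxA
      refine ⟨hφS' x hxS, ?_⟩
      rintro ⟨z', hz'S', ⟨hw1, hw2⟩, hstrict⟩
      obtain ⟨xz, hxzS, hxzφ, hxzv⟩ := hmem z' hz'S'
      apply hxP
      refine ⟨xz, hxzS, ⟨?_, ?_⟩, ?_⟩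
      · rw [hV1W1 xz, hxzφ, hV1W1 x]; exact hw1
      · calc Vd1 xz = W2 z' := hxzv
          _ ≤ W2 (φ x) := hw2
          _ = Vd1 x := (hkey x ⟨hxS, hxP⟩).symm
      · rcases hstrict with h | h
        · left; rw [hV1W1 xz, hxzφ, hV1W1 x]; exact h
        · right
          calc Vd1 xz = W2 z' := hxzv
            _ < W2 (φ x) := h
            _ = Vd1 x := (hkey x ⟨hxS, hxP⟩).symm
    · rintro ⟨hyS', hyP⟩
      obtain ⟨x, hxS, hxφ, hxv⟩ := hmem y hyS'
      have hxA : x ∈ A := by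
        refine ⟨hxS, ?_⟩
        rintro ⟨z, hzS, ⟨hv1, hv2⟩, hstrict⟩
        apply hyP
        refine ⟨φ z, hφS' z hzS, ⟨?_, ?_⟩, ?_⟩
        · rw [← hV1W1 z, ← hxφ, ← hV1W1 x]; exact hv1
        · calc W2 (φ z) ≤ Vd1 z := hle z hzS
            _ ≤ Vd1 x := hv2
            _ = W2 y := hxv
        · rcases hstrict with h | h
          · left; rw [← hV1W1 z, ← hxφ, ← hV1W1 x]; exact h
          · right
            calc W2 (φ z) ≤ Vd1 z := hle z hzS
              _ < Vd1 x := h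
              _ = W2 y := hxv
      exact ⟨x, hxA, hxφ⟩
  rw [← himg, Set.ncard_image_of_injOn hinj]
end
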